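/- arXiv:1808.08759 — 2 statements merged into one kernel-verified Lean document; each statement's English description precedes it below -/
import Mathlib

section
/- Skolem-function soundness of Fork Extension: let Φ = ∀X. ∃y₁(H₁)…∃yₙ(Hₙ). φ ∧ (C₁ ∪ C₂) be a DQBF where C₁ and C₂ are clauses over X ∪ {y₁,…,yₙ}. If the DQBF Φ' obtained by adding a fresh existential variable y with dependency set dep(C₁) ∩ dep(C₂) and replacing the clause C₁ ∪ C₂ by the two clauses C₁ ∪ {y} and C₂ ∪ {¬y} is true (has consistent Skolem functions), then Φ is true. -/
/-- Skolem-function soundness of Fork Extension: if the DQBF obtained by adding a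
fresh existential variable `y` with dependency set `D₁ ∩ D₂` and replacing the
clause `C₁ ∪ C₂` by `C₁ ∪ {y}` and `C₂ ∪ {¬y}` is true (witnessed by consistent
Skolem functions), then the original DQBF `∀X.∃y₁(H₁)…∃yₙ(Hₙ). φ ∧ (C₁ ∪ C₂)` is true.
Here `φ`, `C₁`, `C₂` are satisfaction predicates over an assignment of the universal
variables `X` and the values of the existential variables, and `D₁`, `D₂` are the
dependency sets of the clauses `C₁` and `C₂`. -/
theorem stmt5 {X : Type*} (n : ℕ) (H : Fin n → Set X)
    (φ C₁ C₂ : (X → Bool) → (Fin n → Bool) → Prop)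
    (D₁ D₂ : Set X)
    (hD₁ : ∀ (α α' : X → Bool) (ys : Fin n → Bool),
      (∀ x ∈ D₁, α x = α' x) → (C₁ α ys ↔ C₁ α' ys))
    (hD₂ : ∀ (α α' : X → Bool) (ys : Fin n → Bool),
      (∀ x ∈ D₂, α x = α' x) → (C₂ α ys ↔ C₂ α' ys))
    (htrue' : ∃ (f : ∀ i : Fin n, ((H i → Bool) → Bool))
        (g : ((↥(D₁ ∩ D₂) → Bool) → Bool)),
      ∀ α : X → Bool,
        φ α (fun i => f i (fun x => α x.1)) ∧
        (C₁ α (fun i => f i (fun x => α x.1)) ∨ g (fun x => α x.1) = true) ∧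
        (g (fun x => α x.1) = false ∨ C₂ α (fun i => f i (fun x => α x.1)))) :
    ∃ f : ∀ i : Fin n, ((H i → Bool) → Bool),
      ∀ α : X → Bool,
        φ α (fun i => f i (fun x => α x.1)) ∧
        (C₁ α (fun i => f i (fun x => α x.1)) ∨
          C₂ α (fun i => f i (fun x => α x.1))) := by
  obtain ⟨f, g, hf⟩ := htrue'
  refine ⟨f, fun α => ?_⟩
  obtain ⟨h1, h2, h3⟩ := hf α
  refine ⟨h1, ?_⟩
  cases hg : g (fun x => α x.1) with
  | true => exact Or.inr (h3.resolve_left (by simp [hg]))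
  | false => exact Or.inl (h2.resolve_right (by simp [hg]))
end

section
/- The refinement target is unique for fork-free conflict clauses: if a clause C is fork-free and the existential levels form an antichain decomposition of the dependency lattice (Proposition 1 properties 2 and 3), then among the existential nodes binding a variable of C there is a unique one at the maximal level, and the backward level traversal from any level above it reaches exactly this node first. -/
/-- Uniqueness of the refinement target for fork-free conflict clauses.
Nodes `ι` carry dependency sets `H` and level indices `lvl`; each existential
variable `e : E` is bound at exactly one node `binds e`, and the dependency set of
`e` is `H (binds e)`. If nodes within one level have pairwise incomparable
dependency sets, nodes at smaller levels have strictly smaller or incomparable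
dependency sets compared to nodes at larger levels, and the conflict clause `C`
(a nonempty set of existential variables) is fork-free (the dependency sets of its
variables form a chain), then among the nodes binding a variable of `C` there is a
unique one at the maximal level. -/
theorem stmt15 {ι E X : Type*} (H : ι → Set X) (lvl : ι → ℕ) (binds : E → ι)
    (hlevel : ∀ n m : ι, n ≠ m → lvl n = lvl m → ¬ H n ⊆ H m ∧ ¬ H m ⊆ H n)
    (horder : ∀ n m : ι, lvl n < lvl m → H n ⊂ H m ∨ (¬ H n ⊆ H m ∧ ¬ H m ⊆ H n))
    (C : Finset E) (hne : C.Nonempty)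
    (hforkfree : ∀ e₁ ∈ C, ∀ e₂ ∈ C,
      H (binds e₁) ⊆ H (binds e₂) ∨ H (binds e₂) ⊆ H (binds e₁)) :
    ∃! n : ι, (∃ e ∈ C, binds e = n) ∧
      ∀ m : ι, (∃ e ∈ C, binds e = m) → lvl m ≤ lvl n := by
  obtain ⟨e, he, hmax⟩ := C.exists_max_image (fun e => lvl (binds e)) hne
  refine ⟨binds e, ⟨⟨e, he, rfl⟩, ?_⟩, ?_⟩
  · rintro m ⟨f, hf, rfl⟩; exact hmax f hf
  · rintro m ⟨⟨f, hf, rfl⟩, hm⟩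
    by_contra hne'
    have h1 : lvl (binds e) = lvl (binds f) :=
      le_antisymm (hm _ ⟨e, he, rfl⟩) (hmax f hf)
    have := hlevel _ _ (Ne.symm hne') h1
    rcases hforkfree e he f hf with h | h
    · exact this.1 h
    · exact this.2 h
end
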